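/- Let g be an analytic formal deformation of dimension n with associated algebras N_s and N := N_0, and suppose the deformation is strongly flat from N to a finite-dimensional semisimple ℂ-algebra A with dim_ℂ A = n. Let W be a finite subset of the free algebra FreeAlgebra ℂ (Fin n), and let d : Fin n → N be the standard basis vectors of N (whose underlying space is Fin n → ℂ). Then for every real ε > 0 there exist a real s with 0 < s < ε (with N_s defined) and a tuple b : Fin n → N_s such that dim_ℂ T_N(d; W) ≤ dim_ℂ T_{N_s}(b; W). -/

import Mathlib

open scoped BigOperators

/-- The structure-constant power series `g i j l` specialised (analytically) at `t = s`. -/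
noncomputable def fconst {n : ℕ} (g : Fin n → Fin n → Fin n → PowerSeries ℂ) (s : ℝ) :
    Fin n → Fin n → Fin n → ℂ :=
  fun i j l => ∑' m : ℕ, (PowerSeries.coeff m) (g i j l) * (s : ℂ) ^ m

/-- An analytic formal deformation of dimension `n`: structure constants `g i j l ∈ ℂ⟦t⟧`
with geometrically bounded coefficients, satisfying the associativity law and possessing
a unit vector `u`. -/
structure AnalyticDeformation (n : ℕ) where
  g : Fin n → Fin n → Fin n → PowerSeries ℂ
  u : Fin n → ℂ
  conv : ∀ i j l, ∃ C r : ℝ, 0 < C ∧ 0 < r ∧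
    ∀ m : ℕ, ‖(PowerSeries.coeff m) (g i j l)‖ ≤ C * r ^ m
  assoc : ∀ i j k m, ∑ l, g i j l * g l k m = ∑ l, g j k l * g i l m
  unit_left : ∀ j l, ∑ i, u i • g i j l = if j = l then (1 : PowerSeries ℂ) else 0
  unit_right : ∀ j l, ∑ i, u i • g j i l = if j = l then (1 : PowerSeries ℂ) else 0

/-- `N_s` is defined: all the structure-constant series converge at `t = s`. -/
def AnalyticDeformation.DefinedAt {n : ℕ} (D : AnalyticDeformation n) (s : ℝ) : Prop :=
  ∀ i j l, Summable (fun m : ℕ => (PowerSeries.coeff m) (D.g i j l) * (s : ℂ) ^ m)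

/-- A unital associative `R`-algebra `B` realizes the structure constants `c` if it has a
basis multiplying according to `c`; this expresses `B` being (isomorphic to) the algebra
with underlying space `Fin n → R`, multiplication `(x*y) l = ∑ i j, x i * y j * c i j l`. -/
def RealizesAlgebra {n : ℕ} (R : Type*) [CommRing R] (c : Fin n → Fin n → Fin n → R)
    (B : Type*) [Ring B] [Algebra R B] : Prop :=
  ∃ e : Module.Basis (Fin n) R B, ∀ i j, e i * e j = ∑ l, c i j l • e l

/-- `N_s` is defined and isomorphic to `A` as a `ℂ`-algebra. -/
def AnalyticDeformation.IsoAt {n : ℕ} (D : AnalyticDeformation n) (s : ℝ)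
    (A : Type*) [Ring A] [Algebra ℂ A] : Prop :=
  D.DefinedAt s ∧ RealizesAlgebra ℂ (fconst D.g s) A

/-- The deformation is strongly flat from `N = N_0` to `A`. -/
def AnalyticDeformation.StronglyFlat {n : ℕ} (D : AnalyticDeformation n)
    (A : Type*) [Ring A] [Algebra ℂ A] : Prop :=
  ∀ ε : ℝ, 0 < ε → ∃ s : ℝ, 0 < s ∧ s < ε ∧ D.IsoAt s A

/-- `T_R(b; W)`: the `ℂ`-linear span in `R` of the images of the elements of `W` under
the algebra map `FreeAlgebra ℂ (Fin n) → R` sending the `i`-th generator to `b i`. -/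
noncomputable def Tspan {n : ℕ} (R : Type*) [Ring R] [Algebra ℂ R] (b : Fin n → R)
    (W : Finset (FreeAlgebra ℂ (Fin n))) : Submodule ℂ R :=
  Submodule.span ℂ (⇑(FreeAlgebra.lift ℂ b) '' (W : Set (FreeAlgebra ℂ (Fin n))))

/-! In a basis of `N_s` realizing the structure constants, the coordinates of the image of a
noncommutative polynomial `w` are `w(L_1, …, L_n) u`, where `L_i` is the matrix of left
multiplication by the `i`-th basis vector, read off from the structure constants, and `u` are the
coordinates of the unit. These depend continuously on `s` because the structure constants do, so
`T_{N_s}` is spanned by finitely many vectors moving continuously with `s`. The dimension of such a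
span is lower semicontinuous: a linearly independent subfamily at `s = 0` stays independent for
small `s`. Strong flatness provides arbitrarily small `s` at which `N_s` is defined. -/

open Filter Topology Module Submodule Matrix

section LowerSemicontinuity

variable {𝕜 E : Type*} [NontriviallyNormedField 𝕜] [CompleteSpace 𝕜] [NormedAddCommGroup E]
  [NormedSpace 𝕜 E]

theorem eventually_finrank_span_image_le {X ι : Type*} [TopologicalSpace X] {v : X → ι → E}
    {x₀ : X} (hv : ∀ i, ContinuousAt (fun x => v x i) x₀) (W : Finset ι) :
    ∀ᶠ x in 𝓝 x₀, finrank 𝕜 (span 𝕜 (v x₀ '' W)) ≤ finrank 𝕜 (span 𝕜 (v x '' W)) := by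
  obtain ⟨b, hbW, -, hWb, hb⟩ :=
    exists_linearIndepOn_extension (linearIndepOn_empty 𝕜 (v x₀)) (Set.empty_subset (W : Set ι))
  have : Fintype b := (W.finite_toSet.subset hbW).fintype
  have hspan : span 𝕜 (v x₀ '' W) = span 𝕜 (v x₀ '' b) :=
    le_antisymm (span_le.mpr hWb) (span_mono (Set.image_mono hbW))
  have hfamily : ContinuousAt (fun x (i : b) => v x i) x₀ := continuousAt_pi.mpr fun i => hv i
  filter_upwards [hfamily.eventually (LinearIndependent.eventually hb)] with x hx
  calc finrank 𝕜 (span 𝕜 (v x₀ '' W)) = Fintype.card b := by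
        rw [hspan, Set.image_eq_range, finrank_span_eq_card hb]
    _ = finrank 𝕜 (span 𝕜 (v x '' b)) := by
        rw [Set.image_eq_range, finrank_span_eq_card hx]
    _ ≤ finrank 𝕜 (span 𝕜 (v x '' W)) :=
        have := FiniteDimensional.span_of_finite 𝕜 (W.finite_toSet.image (v x))
        finrank_mono (span_mono (Set.image_mono hbW))

end LowerSemicontinuity

theorem continuousAt_tsum_mul_pow {a : ℕ → ℂ} {C r : ℝ} (hr : 0 < r)
    (ha : ∀ m, ‖a m‖ ≤ C * r ^ m) :
    ContinuousAt (fun s : ℝ => ∑' m, a m * (s : ℂ) ^ m) 0 := by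
  obtain ⟨ρ, hρ0, hρ⟩ : ∃ ρ : ℝ, 0 < ρ ∧ r * ρ = 2⁻¹ := ⟨(2 * r)⁻¹, by positivity, by field_simp⟩
  have hterm : ∀ m, Continuous fun s : ℝ => a m * (s : ℂ) ^ m := fun m => by fun_prop
  refine ContinuousOn.continuousAt ?_ (Metric.closedBall_mem_nhds 0 hρ0)
  refine continuousOn_tsum (fun m => (hterm m).continuousOn)
    (summable_geometric_two.mul_left C) fun m s hs => ?_
  rw [mem_closedBall_zero_iff, Real.norm_eq_abs] at hs
  calc ‖a m * (s : ℂ) ^ m‖ = ‖a m‖ * |s| ^ m := by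
        rw [norm_mul, norm_pow, Complex.norm_real, Real.norm_eq_abs]
    _ ≤ (C * r ^ m) * ρ ^ m :=
        mul_le_mul (ha m) (pow_le_pow_left₀ (abs_nonneg s) hs m) (by positivity)
          ((norm_nonneg _).trans (ha m))
    _ = C * (1 / 2) ^ m := by rw [mul_assoc, ← mul_pow, hρ, one_div]

namespace AnalyticDeformation

variable {n : ℕ} (D : AnalyticDeformation n)

theorem continuousAt_fconst : ContinuousAt (fconst D.g) 0 := by
  refine continuousAt_pi.mpr fun i => continuousAt_pi.mpr fun j => continuousAt_pi.mpr fun l => ?_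
  obtain ⟨C, r, -, hr, hbound⟩ := D.conv i j l
  exact continuousAt_tsum_mul_pow hr hbound

theorem definedAt_zero : D.DefinedAt 0 := fun i j l =>
  summable_of_ne_finset_zero (s := {0}) fun m hm => by
    simp [zero_pow (Finset.notMem_singleton.mp hm)]

theorem sum_unit_mul_fconst {s : ℝ} (hs : D.DefinedAt s) (j l : Fin n) :
    ∑ i, D.u i * fconst D.g s i j l = if j = l then 1 else 0 := by
  have hsum : HasSum (fun m : ℕ => (PowerSeries.coeff m) (∑ i, D.u i • D.g i j l) * (s : ℂ) ^ m)
      (∑ i, D.u i * fconst D.g s i j l) := by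
    simp only [map_sum, map_smul, smul_eq_mul, Finset.sum_mul, mul_assoc]
    exact hasSum_sum fun i _ => ((hs i j l).hasSum).mul_left (D.u i)
  rw [D.unit_left] at hsum
  refine hsum.unique ?_
  split_ifs
  · exact (hasSum_single 0 fun m hm => by simp [PowerSeries.coeff_one, hm]).trans_eq (by simp)
  · exact hasSum_zero.congr_fun fun m => by simp

end AnalyticDeformation

section StructureConstants

variable {R : Type*} [CommRing R] {ι : Type*} [Fintype ι] [DecidableEq ι]

/-- The matrix of left multiplication by `e i` in an algebra with basis `e` satisfying
`e i * e j = ∑ l, c i j l • e l`. -/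
def structMatrix (c : ι → ι → ι → R) (i : ι) : Matrix ι ι R :=
  Matrix.of fun l j => c i j l

/-- The coordinates of the image of `w` under the generators-to-basis map, in an algebra with
structure constants `c` whose unit has coordinates `u` (see `equivFun_lift_eq_evalCoords`). -/
noncomputable def evalCoords (c : ι → ι → ι → R) (u : ι → R) (w : FreeAlgebra R ι) : ι → R :=
  FreeAlgebra.lift R (structMatrix c) w *ᵥ u

theorem continuous_evalCoords [TopologicalSpace R] [IsTopologicalRing R] (u : ι → R)
    (w : FreeAlgebra R ι) : Continuous fun c : ι → ι → ι → R => evalCoords c u w := by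
  refine Continuous.matrix_mulVec ?_ continuous_const
  induction w using FreeAlgebra.induction with
  | grade0 r => simp only [AlgHom.commutes]; exact continuous_const
  | grade1 i => simp only [FreeAlgebra.lift_ι_apply, structMatrix]; fun_prop
  | mul a b ha hb => simp only [map_mul]; exact ha.mul hb
  | add a b ha hb => simp only [map_add]; exact ha.add hb

variable {B : Type*} [Ring B] [Algebra R B] (e : Basis ι R B) {c : ι → ι → ι → R}
  (he : ∀ i j, e i * e j = ∑ l, c i j l • e l)
include he

theorem leftMulMatrix_basis_eq_structMatrix (i : ι) :
    Algebra.leftMulMatrix e (e i) = structMatrix c i := by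
  ext l j
  simp [Algebra.leftMulMatrix_eq_repr_mul, he, structMatrix, Finsupp.single_apply]

theorem leftMulMatrix_lift_eq (w : FreeAlgebra R ι) :
    Algebra.leftMulMatrix e (FreeAlgebra.lift R e w) = FreeAlgebra.lift R (structMatrix c) w := by
  rw [← AlgHom.comp_apply]
  congr 1
  exact FreeAlgebra.hom_ext (funext fun i => by simp [leftMulMatrix_basis_eq_structMatrix e he])

theorem equivFun_one_eq {u : ι → R} (hu : ∀ j l, ∑ i, u i * c i j l = if j = l then 1 else 0) :
    e.equivFun 1 = u := by
  -- `∑ i, u i • e i` and `1` have the same left-multiplication matrix, which determines them.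
  suffices e.equivFun.symm u = 1 by rw [← this, LinearEquiv.apply_symm_apply]
  apply Algebra.leftMulMatrix_injective e
  ext l j
  simp [Basis.equivFun_symm_apply, leftMulMatrix_basis_eq_structMatrix e he, structMatrix,
    Matrix.sum_apply, hu, Matrix.one_apply, eq_comm]

theorem equivFun_lift_eq_evalCoords {u : ι → R}
    (hu : ∀ j l, ∑ i, u i * c i j l = if j = l then 1 else 0) (w : FreeAlgebra R ι) :
    e.equivFun (FreeAlgebra.lift R e w) = evalCoords c u w := by
  rw [evalCoords, ← leftMulMatrix_lift_eq e he, ← equivFun_one_eq e he hu]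
  simpa using (Algebra.leftMulMatrix_mulVec_repr e (FreeAlgebra.lift R e w) 1).symm

end StructureConstants

theorem finrank_Tspan_eq {n : ℕ} {B : Type*} [Ring B] [Algebra ℂ B] (e : Basis (Fin n) ℂ B)
    {c : Fin n → Fin n → Fin n → ℂ} (he : ∀ i j, e i * e j = ∑ l, c i j l • e l) {u : Fin n → ℂ}
    (hu : ∀ j l, ∑ i, u i * c i j l = if j = l then 1 else 0)
    (W : Finset (FreeAlgebra ℂ (Fin n))) :
    finrank ℂ (Tspan B e W) = finrank ℂ (span ℂ (evalCoords c u '' W)) := by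
  rw [← e.equivFun.finrank_map_eq, Tspan, map_span, Set.image_image]
  have hcoords : (fun w => (e.equivFun : B →ₗ[ℂ] Fin n → ℂ) (FreeAlgebra.lift ℂ e w)) =
      evalCoords c u :=
    funext (equivFun_lift_eq_evalCoords e he hu)
  rw [hcoords]

theorem Tspan_dim_le_general {n : ℕ} (D : AnalyticDeformation n)
    (A : Type*) [Ring A] [Algebra ℂ A]
    (hflat : D.StronglyFlat A)
    (W : Finset (FreeAlgebra ℂ (Fin n)))
    (N0 : Type*) [Ring N0] [Algebra ℂ N0] (d : Module.Basis (Fin n) ℂ N0)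
    (hd : ∀ i j, d i * d j = ∑ l, fconst D.g 0 i j l • d l)
    (ε : ℝ) (hε : 0 < ε) :
    ∃ s : ℝ, 0 < s ∧ s < ε ∧ D.DefinedAt s ∧
      ∀ (Ns : Type) [Ring Ns] [Algebra ℂ Ns], RealizesAlgebra ℂ (fconst D.g s) Ns →
        ∃ b : Fin n → Ns,
          Module.finrank ℂ (Tspan N0 (⇑d) W) ≤ Module.finrank ℂ (Tspan Ns b W) := by
  have hcoords : ∀ w, ContinuousAt (fun s => evalCoords (fconst D.g s) D.u w) 0 := fun w =>
    (continuous_evalCoords D.u w).continuousAt.comp D.continuousAt_fconst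
  obtain ⟨δ, hδ, hlsc⟩ :=
    Metric.eventually_nhds_iff.mp (eventually_finrank_span_image_le (𝕜 := ℂ) hcoords W)
  obtain ⟨s, hs, hsεδ, hdef, -⟩ := hflat (min ε δ) (lt_min hε hδ)
  refine ⟨s, hs, hsεδ.trans_le (min_le_left _ _), hdef, fun Ns _ _ ⟨e, he⟩ => ⟨e, ?_⟩⟩
  rw [finrank_Tspan_eq d hd (D.sum_unit_mul_fconst D.definedAt_zero),
    finrank_Tspan_eq e he (D.sum_unit_mul_fconst hdef)]
  exact hlsc (by simpa [abs_of_pos hs] using hsεδ.trans_le (min_le_right _ _))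

/-- for every `ε > 0` there are `0 < s < ε` and a tuple `b` in `N_s` with
`dim_ℂ T_N(d; W) ≤ dim_ℂ T_{N_s}(b; W)`, where `d` is the standard basis of `N = N_0`. -/
theorem Tspan_dim_le {n : ℕ} (hn : 1 ≤ n) (D : AnalyticDeformation n)
    (A : Type*) [Ring A] [Algebra ℂ A] [IsSemisimpleRing A] [FiniteDimensional ℂ A]
    (hA : Module.finrank ℂ A = n) (hflat : D.StronglyFlat A)
    (W : Finset (FreeAlgebra ℂ (Fin n)))
    (N0 : Type*) [Ring N0] [Algebra ℂ N0] (d : Module.Basis (Fin n) ℂ N0)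
    (hd : ∀ i j, d i * d j = ∑ l, fconst D.g 0 i j l • d l)
    (ε : ℝ) (hε : 0 < ε) :
    ∃ s : ℝ, 0 < s ∧ s < ε ∧ D.DefinedAt s ∧
      ∀ (Ns : Type) [Ring Ns] [Algebra ℂ Ns], RealizesAlgebra ℂ (fconst D.g s) Ns →
        ∃ b : Fin n → Ns,
          Module.finrank ℂ (Tspan N0 (⇑d) W) ≤ Module.finrank ℂ (Tspan Ns b W) :=
  Tspan_dim_le_general D A hflat W N0 d hd ε hε
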